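/- For every z in the open unit disk 𝔻 ⊂ ℂ, the real part of (1/(4π²)) times the Lebesgue area integral over 𝔻 of ξ ↦ ξ/(ξ − z) + conj(z)·ξ/(1 − conj(z)·ξ) equals (1 − |z|²)/(4π). (This is the first variation δg(z,0) of the Green function of 𝔻 for the Laplace–Beltrami operator ∇λ∇ with λ(ξ) = 1 + ε|ξ|², evaluated at pole w = 0.) -/

import Mathlib

/-!
In polar coordinates the area integral becomes `∫₀¹ 2πr · A(r) dr`, where `A(r)` is the average of
the integrand over the circle `|ξ| = r`. For `r < 1` the term `conj z · ξ / (1 - conj z · ξ)` is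
holomorphic on the closed disc of radius `r` and vanishes at `0`, so by the mean value property
it averages to `0`; the term `ξ / (ξ - z)` averages to `1` when `|z| < r` (Cauchy's formula)
and to its value `0` at the centre when `r < |z|`. Hence the integral is
`∫_{|z|}^1 2πr dr = π(1 - |z|²)`, which is real. Fubini applies because the singularity `‖ξ - z‖⁻¹` is integrable in the plane.
-/

open ComplexConjugate

open MeasureTheory Set Metric Real

section PolarCoordinates

variable {E : Type*} [NormedAddCommGroup E] [NormedSpace ℝ E]

theorem integrable_iff_integrableOn_polarCoord_target {f : ℝ × ℝ → E} :
    Integrable f ↔ IntegrableOn (fun p ↦ p.1 • f (polarCoord.symm p)) polarCoord.target := by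
  rw [← integrableOn_univ, ← integrableOn_congr_set_ae polarCoord_source_ae_eq_univ,
    ← polarCoord.symm_image_target_eq_source,
    integrableOn_image_iff_integrableOn_abs_det_fderiv_smul volume
      polarCoord.open_target.measurableSet
      (fun p _ ↦ (hasFDerivAt_polarCoord_symm p).hasFDerivWithinAt) polarCoord.symm.injOn]
  refine integrableOn_congr_fun (fun p hp ↦ ?_) polarCoord.open_target.measurableSet
  rw [det_fderivPolarCoordSymm, abs_of_pos hp.1]

protected theorem Complex.integrable_iff_integrableOn_polarCoord_target {f : ℂ → E} :
    Integrable f ↔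
      IntegrableOn (fun p ↦ p.1 • f (Complex.polarCoord.symm p)) polarCoord.target := by
  rw [← (Complex.volume_preserving_equiv_real_prod.symm).integrable_comp_emb
    Complex.measurableEquivRealProd.symm.measurableEmbedding,
    _root_.integrable_iff_integrableOn_polarCoord_target]
  rfl

theorem Complex.polarCoord_symm_eq_circleMap (r θ : ℝ) :
    Complex.polarCoord.symm (r, θ) = circleMap 0 r θ := by
  simp [circleMap, Complex.exp_mul_I, ← Complex.ofReal_cos, ← Complex.ofReal_sin]

theorem setIntegral_Ioo_circleMap_eq_smul_circleAverage (f : ℂ → E) (c : ℂ) (r : ℝ) :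
    ∫ θ in Ioo (-π) π, f (circleMap c r θ) = (2 * π) • circleAverage f c r := by
  rw [circleAverage_eq_integral_add (-π), smul_inv_smul₀ (by positivity),
    intervalIntegral.integral_comp_add_right (fun θ ↦ f (circleMap c r θ)),
    intervalIntegral.integral_of_le (by linarith [pi_pos]), setIntegral_congr_set Ioo_ae_eq_Ioc]
  ring_nf

theorem integral_ball_eq_integral_circleAverage {f : ℂ → E} {R : ℝ}
    (hf : IntegrableOn f (ball 0 R)) :
    ∫ ξ in ball 0 R, f ξ = ∫ r in Ioo 0 R, (2 * π * r) • circleAverage f 0 r := by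
  set g := (ball (0 : ℂ) R).indicator f
  have hS : Ioo 0 R ×ˢ Ioo (-π) π ⊆ polarCoord.target := fun p hp ↦ ⟨hp.1.1, hp.2⟩
  have hgS : EqOn (fun p : ℝ × ℝ ↦ p.1 • g (Complex.polarCoord.symm p))
      (fun p ↦ p.1 • f (circleMap 0 p.1 p.2)) (Ioo 0 R ×ˢ Ioo (-π) π) := by
    rintro ⟨r, θ⟩ ⟨⟨hr, hrR⟩, -⟩
    have hmem : circleMap 0 r θ ∈ ball (0 : ℂ) R := by simpa [abs_of_pos hr] using hrR
    simp only [g, Complex.polarCoord_symm_eq_circleMap, indicator_of_mem hmem]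
  have hg_out : ∀ p ∈ polarCoord.target \ Ioo 0 R ×ˢ Ioo (-π) π,
      p.1 • g (Complex.polarCoord.symm p) = 0 := by
    rintro ⟨r, θ⟩ ⟨⟨hr, hθ⟩, hp⟩
    have : ¬ r < R := fun h ↦ hp ⟨⟨hr, h⟩, hθ⟩
    simp [g, abs_of_pos (show 0 < r from hr), this]
  have hint : IntegrableOn (fun p : ℝ × ℝ ↦ p.1 • f (circleMap 0 p.1 p.2))
      (Ioo 0 R ×ˢ Ioo (-π) π) :=
    ((Complex.integrable_iff_integrableOn_polarCoord_target.1
      ((integrable_indicator_iff measurableSet_ball).2 hf)).mono_set hS).congr_fun hgS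
      (measurableSet_Ioo.prod measurableSet_Ioo)
  rw [← integral_indicator measurableSet_ball, ← Complex.integral_comp_polarCoord_symm,
    setIntegral_eq_of_subset_of_forall_sdiff_eq_zero polarCoord.open_target.measurableSet hS hg_out,
    setIntegral_congr_fun (measurableSet_Ioo.prod measurableSet_Ioo) hgS, Measure.volume_eq_prod,
    setIntegral_prod _ hint]
  refine setIntegral_congr_fun measurableSet_Ioo fun r _ ↦ ?_
  rw [integral_smul, setIntegral_Ioo_circleMap_eq_smul_circleAverage, smul_smul, mul_comm r]

end PolarCoordinates

theorem integrableOn_ball_inv_norm_sub (z : ℂ) (R : ℝ) :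
    IntegrableOn (fun ξ : ℂ ↦ ‖ξ - z‖⁻¹) (ball 0 R) := by
  have h0 : IntegrableOn (fun w : ℂ ↦ ‖w‖⁻¹) (ball 0 (R + ‖z‖)) := by
    refine integrableOn_ball_of_norm_le_rpow (C := 1) (α := 1) (by simp) (by simp)
      (Filter.Eventually.of_forall fun w ↦ ?_) (by fun_prop)
    simp [Real.rpow_neg_one]
  rw [← (measurePreserving_sub_right volume z).integrableOn_comp_preimage
    (measurableEmbedding_subRight z)] at h0
  refine h0.mono_set fun ξ hξ ↦ ?_
  rw [mem_ball_zero_iff] at hξ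
  simp only [mem_preimage, mem_ball_zero_iff]
  linarith [norm_sub_le ξ z]

theorem integrableOn_ball_div_sub (z : ℂ) (R : ℝ) :
    IntegrableOn (fun ξ : ℂ ↦ ξ / (ξ - z)) (ball 0 R) := by
  refine ((integrableOn_ball_inv_norm_sub z R).const_mul R).mono'
    (by fun_prop : Measurable fun ξ : ℂ ↦ ξ / (ξ - z)).aestronglyMeasurable ?_
  refine (ae_restrict_iff' measurableSet_ball).2 (Filter.Eventually.of_forall fun ξ hξ ↦ ?_)
  rw [norm_div, div_eq_mul_inv]
  exact mul_le_mul_of_nonneg_right (mem_ball_zero_iff.1 hξ).le (inv_nonneg.2 (norm_nonneg _))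

theorem one_sub_mul_ne_zero_of_norm_mul_lt {w ξ : ℂ} (h : ‖w‖ * ‖ξ‖ < 1) : 1 - w * ξ ≠ 0 := by
  rw [sub_ne_zero]
  rintro hwξ
  simp [← norm_mul, ← hwξ] at h

theorem differentiableOn_mul_div_one_sub_mul (w : ℂ) :
    DifferentiableOn ℂ (fun ξ ↦ w * ξ / (1 - w * ξ)) {ξ | ‖w‖ * ‖ξ‖ < 1} :=
  .fun_div (by fun_prop) (by fun_prop) fun _ hξ ↦ one_sub_mul_ne_zero_of_norm_mul_lt hξ

theorem closedBall_subset_setOf_norm_mul_lt {w : ℂ} {R : ℝ} (h : ‖w‖ * R < 1) :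
    closedBall (0 : ℂ) R ⊆ {ξ | ‖w‖ * ‖ξ‖ < 1} := fun _ hξ ↦
  (mul_le_mul_of_nonneg_left (mem_closedBall_zero_iff.1 hξ) (norm_nonneg w)).trans_lt h

theorem integrableOn_ball_mul_div_one_sub_mul {w : ℂ} {R : ℝ} (h : ‖w‖ * R < 1) :
    IntegrableOn (fun ξ : ℂ ↦ w * ξ / (1 - w * ξ)) (ball 0 R) :=
  (((differentiableOn_mul_div_one_sub_mul w).continuousOn.mono
    (closedBall_subset_setOf_norm_mul_lt h)).integrableOn_compact
      (isCompact_closedBall 0 R)).mono_set ball_subset_closedBall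

theorem circleAverage_div_sub_of_norm_lt {z : ℂ} {r : ℝ} (h : ‖z‖ < |r|) :
    circleAverage (fun ξ ↦ ξ / (ξ - z)) 0 r = 1 := by
  simpa using diffContOnCl_const.circleAverage_smul_div (c := (0 : ℂ)) (R := r) (w := z)
    (f := fun _ ↦ (1 : ℂ)) (mem_ball_zero_iff.2 h)

theorem circleAverage_div_sub_of_lt_norm {z : ℂ} {r : ℝ} (h : |r| < ‖z‖) :
    circleAverage (fun ξ ↦ ξ / (ξ - z)) 0 r = 0 := by
  have hdiff : DifferentiableOn ℂ (fun ξ ↦ ξ / (ξ - z)) (ball 0 ‖z‖) :=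
    .fun_div (by fun_prop) (by fun_prop) fun _ hξ ↦
      sub_ne_zero.2 (ne_of_mem_of_not_mem hξ (by simp))
  simpa using (hdiff.diffContOnCl_ball (closedBall_subset_ball h)).circleAverage

theorem circleAverage_mul_div_one_sub_mul {w : ℂ} {r : ℝ} (h : ‖w‖ * |r| < 1) :
    circleAverage (fun ξ ↦ w * ξ / (1 - w * ξ)) 0 r = 0 := by
  simpa using ((differentiableOn_mul_div_one_sub_mul w).diffContOnCl_ball
    (closedBall_subset_setOf_norm_mul_lt h)).circleAverage

theorem circleIntegrable_div_sub {z : ℂ} {r : ℝ} (h : |r| ≠ ‖z‖) :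
    CircleIntegrable (fun ξ ↦ ξ / (ξ - z)) 0 r :=
  ContinuousOn.circleIntegrable' <| .div continuousOn_id (by fun_prop) fun ξ hξ ↦
    sub_ne_zero.2 fun hξz ↦ h (by rw [← hξz, ← mem_sphere_zero_iff_norm.1 hξ])

theorem circleIntegrable_mul_div_one_sub_mul {w : ℂ} {r : ℝ} (h : ‖w‖ * |r| < 1) :
    CircleIntegrable (fun ξ ↦ w * ξ / (1 - w * ξ)) 0 r :=
  ContinuousOn.circleIntegrable' <| (differentiableOn_mul_div_one_sub_mul w).continuousOn.mono
    (sphere_subset_closedBall.trans (closedBall_subset_setOf_norm_mul_lt h))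

noncomputable def greenVariationKernel (z ξ : ℂ) : ℂ :=
  ξ / (ξ - z) + conj z * ξ / (1 - conj z * ξ)

theorem integrableOn_ball_greenVariationKernel {z : ℂ} (hz : ‖z‖ < 1) :
    IntegrableOn (greenVariationKernel z) (ball 0 1) :=
  (integrableOn_ball_div_sub z 1).add
    (integrableOn_ball_mul_div_one_sub_mul (by rwa [Complex.norm_conj, mul_one]))

theorem circleAverage_greenVariationKernel {z : ℂ} {r : ℝ} (hz : ‖z‖ < 1) (hr : |r| < 1)
    (hrz : |r| ≠ ‖z‖) :
    circleAverage (greenVariationKernel z) 0 r = if ‖z‖ < |r| then 1 else 0 := by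
  have hw : ‖conj z‖ * |r| < 1 := by
    rw [Complex.norm_conj]
    exact mul_lt_one_of_nonneg_of_lt_one_left (norm_nonneg z) hz hr.le
  unfold greenVariationKernel
  rw [circleAverage_fun_add (circleIntegrable_div_sub hrz)
    (circleIntegrable_mul_div_one_sub_mul hw), circleAverage_mul_div_one_sub_mul hw, add_zero]
  split_ifs with h
  · exact circleAverage_div_sub_of_norm_lt h
  · exact circleAverage_div_sub_of_lt_norm (lt_of_le_of_ne (not_lt.1 h) hrz)

theorem integral_ball_greenVariationKernel {z : ℂ} (hz : ‖z‖ < 1) :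
    ∫ ξ in ball 0 1, greenVariationKernel z ξ = ((π * (1 - ‖z‖ ^ 2) : ℝ) : ℂ) := by
  have hae : ∀ᵐ r : ℝ, r ≠ ‖z‖ := by simp [ae_iff]
  have hradial : ∀ᵐ r : ℝ, r ∈ Ioo 0 1 →
      (2 * π * r) • circleAverage (greenVariationKernel z) 0 r =
        (Ioi ‖z‖).indicator (fun r ↦ ((2 * π * r : ℝ) : ℂ)) r := by
    filter_upwards [hae] with r hrz hr
    rw [circleAverage_greenVariationKernel hz (by rw [abs_of_pos hr.1]; exact hr.2)
      (by rwa [abs_of_pos hr.1]), abs_of_pos hr.1]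
    simp only [indicator_apply, mem_Ioi]
    split_ifs <;> simp [Complex.real_smul]
  have hIoo : Ioo 0 1 ∩ Ioi ‖z‖ = Ioo ‖z‖ 1 := by
    rw [inter_comm, Ioi_inter_Ioo, max_eq_left (norm_nonneg z)]
  rw [integral_ball_eq_integral_circleAverage (integrableOn_ball_greenVariationKernel hz),
    setIntegral_congr_ae measurableSet_Ioo hradial, setIntegral_indicator measurableSet_Ioi, hIoo,
    integral_complex_ofReal, setIntegral_congr_set Ioo_ae_eq_Ioc,
    ← intervalIntegral.integral_of_le hz.le, intervalIntegral.integral_const_mul, integral_id]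
  congr 1
  ring

/-- For `z` in the open unit disk, the real part of
`(1/(4π²)) ∫_𝔻 (ξ/(ξ−z) + conj(z)ξ/(1−conj(z)ξ)) dA(ξ)` equals `(1−|z|²)/(4π)`.
This is the first variation `δg(z,0)` of the Green function of `𝔻` for the
Laplace–Beltrami operator `∇λ∇` with `λ(ξ) = 1 + ε|ξ|²`, at pole `w = 0`. -/
theorem beltrami_variation_at_origin (z : ℂ) (hz : z ∈ Metric.ball (0 : ℂ) 1) :
    ((1 / (4 * (Real.pi : ℂ) ^ 2)) *
        ∫ ξ in Metric.ball (0 : ℂ) 1,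
          (ξ / (ξ - z) + conj z * ξ / (1 - conj z * ξ))).re =
      (1 - ‖z‖ ^ 2) / (4 * Real.pi) := by
  have h := integral_ball_greenVariationKernel (mem_ball_zero_iff.1 hz)
  unfold greenVariationKernel at h
  rw [h]
  norm_cast
  field_simp
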